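/- Define the eight triples of vectors in ℝ³: (η¹, η₁¹, η₂¹) = ((1,0,0), (0,1,0), (0,0,1)); (η², η₁², η₂²) = ((0,0,−1), (0,1,0), (1,0,0)); (η³, η₁³, η₂³) = ((0,1,0), (−1,0,0), (0,0,1)); (η⁴, η₁⁴, η₂⁴) = ((2/3,1/3,−2/3), (1/3,2/3,2/3), (2/3,−2/3,1/3)); (η⁵, η₁⁵, η₂⁵) = ((2/3,2/3,1/3), (−2/3,1/3,2/3), (1/3,−2/3,2/3)); (η⁶, η₁⁶, η₂⁶) = ((2/3,−2/3,−1/3), (2/3,1/3,2/3), (−1/3,−2/3,2/3)); (η⁷, η₁⁷, η₂⁷) = ((2/3,−1/3,2/3), (−1/3,2/3,2/3), (−2/3,−2/3,1/3)); (η⁸, η₁⁸, η₂⁸) = ((1/3,2/3,−2/3), (−2/3,2/3,1/3), (2/3,1/3,2/3)). Then: (a) each of these eight triples is an orthonormal frame of ℝ³; and (b) the eight pairs Wᵢ = (η₁ⁱ ⊗ η₁ⁱ − η₂ⁱ ⊗ η₂ⁱ, η₁ⁱ ⊗ η₂ⁱ − η₂ⁱ ⊗ η₁ⁱ), i = 1,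 …, 8, are linearly independent over ℝ and form a basis of the 8-dimensional real vector space V = Sym₀³ × Skew³. -/

import Mathlib

open scoped BigOperators

/-- Euclidean dot product on `ℝ³` (vectors as `Fin 3 → ℝ`). -/
def dot3 (a b : Fin 3 → ℝ) : ℝ := ∑ i, a i * b i

/-- `(e₀, e₁, e₂)` is an orthonormal frame (orthonormal basis) of `ℝ³`. -/
def IsONFrame (e₀ e₁ e₂ : Fin 3 → ℝ) : Prop :=
  dot3 e₀ e₀ = 1 ∧ dot3 e₁ e₁ = 1 ∧ dot3 e₂ e₂ = 1 ∧
  dot3 e₀ e₁ = 0 ∧ dot3 e₀ e₂ = 0 ∧ dot3 e₁ e₂ = 0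

/-- The eight frame directions `ηⁱ`. -/
noncomputable def eta8 : Fin 8 → Fin 3 → ℝ :=
  ![![1, 0, 0], ![0, 0, -1], ![0, 1, 0],
    ![2/3, 1/3, -2/3], ![2/3, 2/3, 1/3], ![2/3, -2/3, -1/3],
    ![2/3, -1/3, 2/3], ![1/3, 2/3, -2/3]]

/-- The eight first frame vectors `η₁ⁱ`. -/
noncomputable def eta8₁ : Fin 8 → Fin 3 → ℝ :=
  ![![0, 1, 0], ![0, 1, 0], ![-1, 0, 0],
    ![1/3, 2/3, 2/3], ![-2/3, 1/3, 2/3], ![2/3, 1/3, 2/3],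
    ![-1/3, 2/3, 2/3], ![-2/3, 2/3, 1/3]]

/-- The eight second frame vectors `η₂ⁱ`. -/
noncomputable def eta8₂ : Fin 8 → Fin 3 → ℝ :=
  ![![0, 0, 1], ![1, 0, 0], ![0, 0, 1],
    ![2/3, -2/3, 1/3], ![1/3, -2/3, 2/3], ![-1/3, -2/3, 2/3],
    ![-2/3, -2/3, 1/3], ![2/3, 1/3, 2/3]]

/-- `Wᵢ = (η₁ⁱ ⊗ η₁ⁱ − η₂ⁱ ⊗ η₂ⁱ, η₁ⁱ ⊗ η₂ⁱ − η₂ⁱ ⊗ η₁ⁱ) ∈ Sym₀³ × Skew³`. -/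
noncomputable def W8 : Fin 8 → Matrix (Fin 3) (Fin 3) ℝ × Matrix (Fin 3) (Fin 3) ℝ :=
  fun i =>
    (Matrix.vecMulVec (eta8₁ i) (eta8₁ i) - Matrix.vecMulVec (eta8₂ i) (eta8₂ i),
     Matrix.vecMulVec (eta8₁ i) (eta8₂ i) - Matrix.vecMulVec (eta8₂ i) (eta8₁ i))

/-! The frame conditions are a finite computation. For (b), `Wᵢ` lies in `V` because `η₁ⁱ`, `η₂ⁱ`
are unit vectors, so that `η₁ⁱ ⊗ η₁ⁱ − η₂ⁱ ⊗ η₂ⁱ` is traceless. A pair `(M, N) ∈ V` is determined by the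
eight entries `M₀₀, M₁₁, M₀₁, M₀₂, M₁₂, N₀₁, N₀₂, N₁₂`, and the `8 × 8` matrix of these coordinates of
`W₁, …, W₈` has an explicit inverse. Invertibility gives linear independence and spanning at once. -/

open Matrix

section TracelessSymmProdSkew

variable {n R : Type*} [Fintype n] [CommRing R]

def tracelessSymmProdSkew : Submodule R (Matrix n n R × Matrix n n R) where
  carrier := {p | p.1.IsSymm ∧ p.1.trace = 0 ∧ p.2ᵀ = -p.2}
  add_mem' := by
    rintro ⟨M, N⟩ ⟨M', N'⟩ ⟨hM, htM, hN⟩ ⟨hM', htM', hN'⟩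
    exact ⟨hM.add hM', by simp [trace_add, htM, htM'],
      by simp [transpose_add, hN, hN', add_comm]⟩
  zero_mem' := ⟨isSymm_zero, trace_zero .., by simp⟩
  smul_mem' := by
    rintro c ⟨M, N⟩ ⟨hM, htM, hN⟩
    exact ⟨hM.smul c, by simp [trace_smul, htM], by simp [transpose_smul, hN]⟩

theorem vecMulVec_sub_mem_tracelessSymmProdSkew (u v : n → R) (h : u ⬝ᵥ u = v ⬝ᵥ v) :
    (vecMulVec u u - vecMulVec v v, vecMulVec u v - vecMulVec v u) ∈ tracelessSymmProdSkew := by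
  refine ⟨?_, ?_, ?_⟩
  · simp [IsSymm, transpose_sub, transpose_vecMulVec]
  · simp [trace_sub, h]
  · simp [transpose_sub, transpose_vecMulVec]

end TracelessSymmProdSkew

section Coords

variable {R : Type*} [CommRing R]

def tracelessSkewCoords :
    (Matrix (Fin 3) (Fin 3) R × Matrix (Fin 3) (Fin 3) R) →ₗ[R] (Fin 8 → R) where
  toFun p := ![p.1 0 0, p.1 1 1, p.1 0 1, p.1 0 2, p.1 1 2, p.2 0 1, p.2 0 2, p.2 1 2]
  map_add' p q := by ext i; fin_cases i <;> rfl
  map_smul' c p := by ext i; fin_cases i <;> rfl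

theorem eq_zero_of_tracelessSkewCoords_eq_zero [IsAddTorsionFree R]
    {p : Matrix (Fin 3) (Fin 3) R × Matrix (Fin 3) (Fin 3) R} (hp : p ∈ tracelessSymmProdSkew)
    (h : tracelessSkewCoords p = 0) : p = 0 := by
  obtain ⟨M, N⟩ := p
  obtain ⟨hM, htM, hN⟩ := hp
  simp only [tracelessSkewCoords, LinearMap.coe_mk, AddHom.coe_mk] at h
  obtain ⟨hM00, hM11, hM01, hM02, hM12, hN01, hN02, hN12⟩ := by simpa using h
  have hMsymm : ∀ i j, M j i = M i j := hM.apply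
  have hM22 : M 2 2 = 0 := by simpa [trace_fin_three, hM00, hM11] using htM
  have hNskew : ∀ i j, N j i = -N i j := fun i j => congrFun (congrFun hN i) j
  have hNdiag : ∀ i, N i i = 0 := fun i => self_eq_neg.mp (hNskew i i)
  refine Prod.ext ?_ ?_ <;> ext i j <;> fin_cases i <;> fin_cases j <;>
    simp [hMsymm 0 1, hMsymm 0 2, hMsymm 1 2, hNskew 0 1, hNskew 0 2, hNskew 1 2, hNdiag,
      hM00, hM11, hM22, hM01, hM02, hM12, hN01, hN02, hN12]

theorem injOn_tracelessSkewCoords [IsAddTorsionFree R] :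
    Set.InjOn (tracelessSkewCoords (R := R)) (tracelessSymmProdSkew (n := Fin 3) (R := R)) :=
  fun p hp q hq hpq => sub_eq_zero.1 <|
    eq_zero_of_tracelessSkewCoords_eq_zero (sub_mem hp hq) (by rw [map_sub, hpq, sub_self])

end Coords

theorem isONFrame_eta8 (i : Fin 8) : IsONFrame (eta8 i) (eta8₁ i) (eta8₂ i) := by
  fin_cases i <;>
    norm_num [IsONFrame, dot3, Fin.sum_univ_three, eta8, eta8₁, eta8₂, cons_val_two]

theorem W8_mem_tracelessSymmProdSkew (i : Fin 8) : W8 i ∈ tracelessSymmProdSkew := by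
  obtain ⟨-, h₁, h₂, -⟩ := isONFrame_eta8 i
  exact vecMulVec_sub_mem_tracelessSymmProdSkew _ _ (h₁.trans h₂.symm)

noncomputable def W8CoordMatrix : Matrix (Fin 8) (Fin 8) ℝ :=
  of fun i => tracelessSkewCoords (W8 i)

theorem W8CoordMatrix_eq : W8CoordMatrix = (9 : ℝ)⁻¹ • !![
    0, 9, 0, 0, 0, 0, 0, 9;
    -9, 9, 0, 0, 0, -9, 0, 0;
    9, 0, 0, 0, 0, 0, -9, 0;
    -3, 0, 6, 0, 6, -6, -3, 6;
    3, -3, 0, -6, 6, 3, -6, 6;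
    3, -3, 0, 6, 6, -3, 6, 6;
    -3, 0, -6, 0, 6, 6, 3, 6;
    0, 3, -6, -6, 0, -6, -6, 3] := by
  ext i j
  fin_cases i <;> fin_cases j <;>
    norm_num [W8CoordMatrix, tracelessSkewCoords, W8, eta8₁, eta8₂, cons_val_two]

theorem W8CoordMatrix_mul_eq_one : W8CoordMatrix * ((12 : ℝ)⁻¹ • !![
      2, 10, 2, -18, 18, 12, -12, -6;
      4, 20, 4, -18, 18, 6, -6, -12;
      3, 3, -3, 0, 9, 0, -9, -9;
      -1, -11, 11, 18, -27, -6, 15, 3;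
      -7, 25, 5, -18, 27, 12, -3, -15;
      2, -2, 2, 0, 0, -6, 6, -6;
      2, 10, -10, -18, 18, 12, -12, -6;
      8, -20, -4, 18, -18, -6, 6, 12]) = 1 := by
  rw [W8CoordMatrix_eq, smul_mul_smul_comm]
  ext i j
  rw [Matrix.smul_apply]
  fin_cases i <;> fin_cases j <;> simp [mul_apply, Fin.sum_univ_eight, one_apply] <;> norm_num

theorem isUnit_W8CoordMatrix : IsUnit W8CoordMatrix :=
  IsUnit.of_mul_eq_one _ W8CoordMatrix_mul_eq_one

theorem linearIndependent_W8 : LinearIndependent ℝ W8 :=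
  .of_comp tracelessSkewCoords (linearIndependent_rows_iff_isUnit.2 isUnit_W8CoordMatrix)

theorem span_W8 : Submodule.span ℝ (Set.range W8) = tracelessSymmProdSkew := by
  have hle : Submodule.span ℝ (Set.range W8) ≤ tracelessSymmProdSkew :=
    Submodule.span_le.2 (Set.range_subset_iff.2 W8_mem_tracelessSymmProdSkew)
  refine le_antisymm hle fun p hp => ?_
  obtain ⟨g, hg : g ᵥ* W8CoordMatrix = _⟩ :=
    vecMul_surjective_iff_isUnit.2 isUnit_W8CoordMatrix (tracelessSkewCoords p)
  have hq : ∑ i, g i • W8 i ∈ Submodule.span ℝ (Set.range W8) :=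
    (Submodule.mem_span_range_iff_exists_fun ℝ).2 ⟨g, rfl⟩
  have hcoords : tracelessSkewCoords (∑ i, g i • W8 i) = tracelessSkewCoords p := by
    rw [← hg, vecMul_eq_sum, map_sum]
    simp only [map_smul]
    rfl
  rwa [injOn_tracelessSkewCoords hp (hle hq) hcoords.symm]

/-- (a) Each of the eight explicit triples `(ηⁱ, η₁ⁱ, η₂ⁱ)` is an orthonormal frame of
`ℝ³`; (b) the pairs `W₁, …, W₈` are linearly independent and form a basis of the
8-dimensional space `V = Sym₀³ × Skew³`: each `Wᵢ` lies in `V`, and every element of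
`V` lies in their span. -/
theorem W8_frames_and_basis :
    (∀ i, IsONFrame (eta8 i) (eta8₁ i) (eta8₂ i)) ∧
    LinearIndependent ℝ W8 ∧
    (∀ i, (W8 i).1.IsSymm ∧ (W8 i).1.trace = 0 ∧ (W8 i).2.transpose = -(W8 i).2) ∧
    (∀ M N : Matrix (Fin 3) (Fin 3) ℝ, M.IsSymm → M.trace = 0 → N.transpose = -N →
      (M, N) ∈ Submodule.span ℝ (Set.range W8)) :=
  ⟨isONFrame_eta8, linearIndependent_W8, W8_mem_tracelessSymmProdSkew,
    fun _ _ hM htM hN => span_W8 ▸ ⟨hM, htM, hN⟩⟩
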